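/- arXiv:1707.03062 — 2 statements merged into one kernel-verified Lean document; each statement's English description precedes it below -/
import Mathlib

section
/- Let 0 < r < ∞ and let T be a bounded invariant linear operator on H with matrix symbol σ. Then T belongs to the Schatten class S_r(H) if and only if Σ_{ℓ=0}^{∞} ‖σ(ℓ)‖_{S_r}^r < ∞, and in that case ‖T‖_{S_r(H)} = (Σ_{ℓ=0}^{∞} ‖σ(ℓ)‖_{S_r}^r)^{1/r}. -/
open scoped InnerProductSpace ComplexOrder

/-- The singular values of a complex square matrix `A`: the square roots of the eigenvalues of
the positive semidefinite matrix `Aᴴ A`. -/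
noncomputable def matrixSingularValues {n : ℕ} (A : Matrix (Fin n) (Fin n) ℂ) : Fin n → ℝ :=
  fun i => Real.sqrt ((Matrix.posSemidef_conjTranspose_mul_self A).1.eigenvalues i)

/-- A Schmidt representation `T = Σ_k s_k ⟨ψ_k, ·⟩ φ_k` of an operator `T`, with `(ψ_k)`, `(φ_k)`
orthonormal and `s_k ≥ 0`; the `s_k` are then precisely the singular values of `T` (together
with possibly additional zeros), so that for `0 < r < ∞` the operator `T` belongs to the
Schatten class `S_r(H)` iff it has such a representation with `Σ_k s_k^r < ∞`, and then
`‖T‖_{S_r} = (Σ_k s_k^r)^{1/r}`. -/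
def IsSchmidtRep {H : Type*} [NormedAddCommGroup H] [InnerProductSpace ℂ H]
    (T : H →L[ℂ] H) (ψ φ : ℕ → H) (s : ℕ → ℝ) : Prop :=
  Orthonormal ℂ ψ ∧ Orthonormal ℂ φ ∧ (∀ k, 0 ≤ s k) ∧
    ∀ f : H, T f = ∑' k : ℕ, ((s k : ℂ) * ⟪ψ k, f⟫_ℂ) • φ k

/-! Diagonalising `σ(ℓ)ᴴ σ(ℓ)` inside each block `H_ℓ` produces a Hilbert basis `χ` of `H` with
`T χ_w = t_w φ_w` for an orthonormal family `φ`, where `t_w` runs over the singular values of all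
the matrices `σ(ℓ)`; enumerating `χ` by `ℕ` turns this into a Schmidt representation of `T`.
Conversely, for any Schmidt representation `T = Σ_k s_k ⟨ψ_k, ·⟩ φ_k` the weights
`p_{kw} = |⟨χ_w, ψ_k⟩|²` sum to `1` over `w` (Parseval), sum to `1` over `k` whenever `t_w ≠ 0`,
and vanish unless `s_k = t_w`. Hence `Σ_k s_k^r = Σ_{k,w} s_k^r p_{kw} = Σ_w t_w^r` in `[0, ∞]`. -/

section Orthonormal

variable {𝕜 E ι : Type*} [RCLike 𝕜] [NormedAddCommGroup E] [InnerProductSpace 𝕜 E]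
  {v : ι → E} {c : ι → 𝕜} {x : E}

theorem Orthonormal.inner_eq_of_hasSum (hv : Orthonormal 𝕜 v)
    (h : HasSum (fun i => c i • v i) x) (i : ι) : ⟪v i, x⟫_𝕜 = c i := by
  have hsingle : HasSum (fun j => ⟪v i, c j • v j⟫_𝕜) (⟪v i, c i • v i⟫_𝕜) :=
    hasSum_single i fun j hj => by rw [inner_smul_right, hv.2 hj.symm, mul_zero]
  have hx := h.mapL (innerSL 𝕜 (v i))
  simp only [innerSL_apply_apply] at hx
  rw [hx.unique hsingle, inner_smul_right, inner_self_eq_norm_sq_to_K, hv.1 i]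
  simp

theorem Orthonormal.hasSum_norm_sq_of_hasSum (hv : Orthonormal 𝕜 v)
    (h : HasSum (fun i => c i • v i) x) : HasSum (fun i => ‖c i‖ ^ 2) (‖x‖ ^ 2) := by
  have hx := h.mapL (innerSL 𝕜 x)
  have hterm : ∀ i, innerSL 𝕜 x (c i • v i) = ((‖c i‖ ^ 2 : ℝ) : 𝕜) := fun i => by
    rw [innerSL_apply_apply, inner_smul_right, ← inner_conj_symm, hv.inner_eq_of_hasSum h,
      RCLike.mul_conj, RCLike.ofReal_pow]
  simp only [hterm, innerSL_apply_apply, inner_self_eq_norm_sq_to_K, ← RCLike.ofReal_pow] at hx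
  exact (RCLike.hasSum_ofReal 𝕜).mp hx

theorem Orthonormal.sum_inner_smul_eq_of_mem_span [Fintype ι] (hv : Orthonormal 𝕜 v)
    (hx : x ∈ Submodule.span 𝕜 (Set.range v)) : ∑ i, ⟪v i, x⟫_𝕜 • v i = x := by
  obtain ⟨c, rfl⟩ := (Submodule.mem_span_range_iff_exists_fun 𝕜).mp hx
  simp only [hv.inner_right_fintype]

end Orthonormal

section ENNRealTsum

open ENNReal

variable {ι κ : Type*}

theorem ENNReal.tsum_eq_tsum_of_transport {f : κ → ℝ≥0∞} {g : ι → ℝ≥0∞} (p : κ → ι → ℝ≥0∞)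
    (hfg : ∀ k w, p k w ≠ 0 → f k = g w) (hrow : ∀ k, ∑' w, p k w = 1)
    (hcol : ∀ w, g w ≠ 0 → ∑' k, p k w = 1) : ∑' k, f k = ∑' w, g w := by
  have hterm : ∀ k w, f k * p k w = g w * p k w := fun k w => by
    by_cases h : p k w = 0
    · simp [h]
    · rw [hfg k w h]
  calc ∑' k, f k = ∑' k, ∑' w, f k * p k w := by simp_rw [ENNReal.tsum_mul_left, hrow, mul_one]
    _ = ∑' w, ∑' k, g w * p k w := by simp_rw [hterm]; exact ENNReal.tsum_comm
    _ = ∑' w, g w := by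
      refine tsum_congr fun w => ?_
      by_cases h : g w = 0
      · simp [h]
      · rw [ENNReal.tsum_mul_left, hcol w h, mul_one]

theorem HasSum.tsum_ofReal_eq {f : κ → ℝ} {a : ℝ} (h : HasSum f a) (hf : ∀ k, 0 ≤ f k) :
    ∑' k, ENNReal.ofReal (f k) = ENNReal.ofReal a := by
  rw [← ENNReal.ofReal_tsum_of_nonneg hf h.summable, h.tsum_eq]

theorem summable_iff_tsum_ofReal_ne_top {f : κ → ℝ} (hf : ∀ k, 0 ≤ f k) :
    Summable f ↔ ∑' k, ENNReal.ofReal (f k) ≠ ∞ :=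
  ⟨Summable.tsum_ofReal_ne_top, fun h =>
    (ENNReal.summable_toReal h).congr fun k => ENNReal.toReal_ofReal (hf k)⟩

theorem summable_iff_of_tsum_ofReal_eq {f : κ → ℝ} {g : ι → ℝ} (hf : ∀ k, 0 ≤ f k)
    (hg : ∀ w, 0 ≤ g w) (h : ∑' k, ENNReal.ofReal (f k) = ∑' w, ENNReal.ofReal (g w)) :
    Summable f ↔ Summable g := by
  rw [summable_iff_tsum_ofReal_ne_top hf, summable_iff_tsum_ofReal_ne_top hg, h]

theorem ENNReal.toReal_tsum_ofReal {f : κ → ℝ} (hf : ∀ k, 0 ≤ f k) :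
    (∑' k, ENNReal.ofReal (f k)).toReal = ∑' k, f k := by
  rw [ENNReal.tsum_toReal_eq fun _ => ofReal_ne_top]
  exact tsum_congr fun k => toReal_ofReal (hf k)

theorem tsum_eq_of_tsum_ofReal_eq {f : κ → ℝ} {g : ι → ℝ} (hf : ∀ k, 0 ≤ f k) (hg : ∀ w, 0 ≤ g w)
    (h : ∑' k, ENNReal.ofReal (f k) = ∑' w, ENNReal.ofReal (g w)) : ∑' k, f k = ∑' w, g w := by
  rw [← ENNReal.toReal_tsum_ofReal hf, h, ENNReal.toReal_tsum_ofReal hg]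

end ENNRealTsum

section SchmidtExpansion

variable {H ι κ : Type*} [NormedAddCommGroup H] [InnerProductSpace ℂ H] {T : H →L[ℂ] H}

/-- The unconditionally convergent form of `IsSchmidtRep`, over an arbitrary index type. -/
structure IsSchmidtExpansion (T : H →L[ℂ] H) (ψ φ : ι → H) (s : ι → ℝ) : Prop where
  orthonormal_left : Orthonormal ℂ ψ
  orthonormal_right : Orthonormal ℂ φ
  nonneg : ∀ k, 0 ≤ s k
  hasSum_apply : ∀ x, HasSum (fun k => ((s k : ℂ) * ⟪ψ k, x⟫_ℂ) • φ k) (T x)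

theorem HilbertBasis.isSchmidtExpansion (χ : HilbertBasis ι ℂ H) {φ : ι → H} {t : ι → ℝ}
    (hφ : Orthonormal ℂ φ) (ht : ∀ w, 0 ≤ t w) (hT : ∀ w, T (χ w) = (t w : ℂ) • φ w) :
    IsSchmidtExpansion T χ φ t where
  orthonormal_left := χ.orthonormal
  orthonormal_right := hφ
  nonneg := ht
  hasSum_apply x := by
    convert (χ.hasSum_repr x).mapL T using 2 with w
    rw [map_smul, hT, smul_smul, χ.repr_apply_apply, mul_comm]

theorem IsSchmidtRep.isSchmidtExpansion [CompleteSpace H] {ψ φ : ℕ → H} {s : ℕ → ℝ}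
    (h : IsSchmidtRep T ψ φ s) : IsSchmidtExpansion T ψ φ s := by
  obtain ⟨hψ, hφ, hs, hT⟩ := h
  have happly : ∀ k, T (ψ k) = (s k : ℂ) • φ k := fun k => by
    rw [hT, tsum_eq_single k fun j hj => by rw [hψ.2 hj, mul_zero, zero_smul],
      inner_self_eq_norm_sq_to_K, hψ.1 k]
    simp
  have hle : ∀ k, s k ≤ ‖T‖ := fun k => by
    simpa [happly, norm_smul, hφ.1, hψ.1, abs_of_nonneg (hs k)] using T.le_opNorm (ψ k)
  refine ⟨hψ, hφ, hs, fun x => ?_⟩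
  rw [hT x]
  refine Summable.hasSum ?_
  have hsq : Summable fun k => ‖(s k : ℂ) * ⟪ψ k, x⟫_ℂ‖ ^ 2 := by
    refine .of_nonneg_of_le (fun k => by positivity) (fun k => ?_)
      ((hψ.inner_products_summable x).mul_left (‖T‖ ^ 2))
    rw [norm_mul, mul_pow, Complex.norm_real, Real.norm_of_nonneg (hs k)]
    gcongr
    · exact hs k
    · exact hle k
  exact ((hφ.orthogonalFamily.summable_iff_norm_sq_summable _).mpr hsq).congr fun k => rfl

namespace IsSchmidtExpansion

variable {ψ φ : κ → H} {s : κ → ℝ} (h : IsSchmidtExpansion T ψ φ s)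
include h

theorem isSchmidtRep_comp_equiv (e : ℕ ≃ κ) : IsSchmidtRep T (ψ ∘ e) (φ ∘ e) (s ∘ e) :=
  ⟨h.orthonormal_left.comp e e.injective, h.orthonormal_right.comp e e.injective,
    fun k => h.nonneg (e k), fun x => ((e.hasSum_iff.mpr (h.hasSum_apply x)).tsum_eq).symm⟩

theorem inner_right_apply (k : κ) (x : H) : ⟪φ k, T x⟫_ℂ = s k * ⟪ψ k, x⟫_ℂ :=
  h.orthonormal_right.inner_eq_of_hasSum (h.hasSum_apply x) k

theorem apply_left (k : κ) : T (ψ k) = (s k : ℂ) • φ k := by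
  have hsingle := hasSum_single (f := fun j => ((s j : ℂ) * ⟪ψ j, ψ k⟫_ℂ) • φ j) k
    fun j hj => by rw [h.orthonormal_left.2 hj, mul_zero, zero_smul]
  rw [(h.hasSum_apply (ψ k)).unique hsingle, inner_self_eq_norm_sq_to_K,
    h.orthonormal_left.1 k]
  simp

theorem norm_apply_left (k : κ) : ‖T (ψ k)‖ = s k := by
  rw [h.apply_left, norm_smul, h.orthonormal_right.1 k, mul_one, Complex.norm_real,
    Real.norm_of_nonneg (h.nonneg k)]

theorem hasSum_norm_sq (x : H) :
    HasSum (fun k => s k ^ 2 * ‖⟪ψ k, x⟫_ℂ‖ ^ 2) (‖T x‖ ^ 2) := by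
  simpa [norm_mul, mul_pow, Real.norm_of_nonneg (h.nonneg _)] using
    h.orthonormal_right.hasSum_norm_sq_of_hasSum (h.hasSum_apply x)

theorem eq_of_inner_ne_zero {χ φ' : ι → H} {t : ι → ℝ} (h' : IsSchmidtExpansion T χ φ' t)
    {k : κ} {w : ι} (hkw : ⟪χ w, ψ k⟫_ℂ ≠ 0) : s k = t w := by
  have h₁ : (s k : ℂ) * ⟪φ' w, φ k⟫_ℂ = t w * ⟪χ w, ψ k⟫_ℂ := by
    rw [← h'.inner_right_apply, h.apply_left, inner_smul_right]
  have h₂ : (t w : ℂ) * ⟪φ' w, φ k⟫_ℂ = s k * ⟪χ w, ψ k⟫_ℂ := by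
    have := congrArg (starRingEnd ℂ) (h.inner_right_apply k (χ w))
    rwa [h'.apply_left, inner_smul_right, map_mul, map_mul, inner_conj_symm, inner_conj_symm,
      Complex.conj_ofReal, Complex.conj_ofReal] at this
  have hsq : ((s k : ℂ) ^ 2 - (t w : ℂ) ^ 2) * ⟪χ w, ψ k⟫_ℂ = 0 := by
    linear_combination (t w : ℂ) * h₁ - (s k : ℂ) * h₂
  have : s k ^ 2 = t w ^ 2 := by
    exact_mod_cast sub_eq_zero.mp ((mul_eq_zero.mp hsq).resolve_right hkw)
  exact (pow_left_inj₀ (h.nonneg k) (h'.nonneg w) two_ne_zero).mp this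

theorem tsum_ofReal_rpow_eq (χ : HilbertBasis ι ℂ H) {φ' : ι → H} {t : ι → ℝ}
    (hχ : IsSchmidtExpansion T χ φ' t) {r : ℝ} (hr : 0 < r) :
    ∑' k, ENNReal.ofReal (s k ^ r) = ∑' w, ENNReal.ofReal (t w ^ r) := by
  set p : κ → ι → ℝ := fun k w => ‖⟪χ w, ψ k⟫_ℂ‖ ^ 2
  have hp : ∀ k w, p k w ≠ 0 → s k = t w := fun k w hkw =>
    h.eq_of_inner_ne_zero hχ fun h0 => hkw (by simp [p, h0])
  have hrow : ∀ k, HasSum (fun w => p k w) 1 := fun k => by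
    simpa [p, χ.repr_apply_apply, h.orthonormal_left.1 k] using
      χ.orthonormal.hasSum_norm_sq_of_hasSum (χ.hasSum_repr (ψ k))
  have hcol : ∀ w, t w ≠ 0 → HasSum (fun k => p k w) 1 := fun w hw => by
    have hnorm := h.hasSum_norm_sq (χ w)
    rw [hχ.norm_apply_left] at hnorm
    have hterm : ∀ k, s k ^ 2 * ‖⟪ψ k, χ w⟫_ℂ‖ ^ 2 = t w ^ 2 * p k w := fun k => by
      rw [norm_inner_symm]
      by_cases h0 : p k w = 0
      · simp [p, h0]
      · rw [hp k w h0]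
    simp only [hterm] at hnorm
    exact (hasSum_mul_left_iff (pow_ne_zero 2 hw)).mp (by rwa [mul_one])
  refine ENNReal.tsum_eq_tsum_of_transport (fun k w => ENNReal.ofReal (p k w)) ?_
    (fun k => by rw [(hrow k).tsum_ofReal_eq fun w => by positivity, ENNReal.ofReal_one]) ?_
  · intro k w hkw
    rw [hp k w fun h0 => hkw (by simp [h0])]
  · intro w hw
    have hw' : t w ≠ 0 := fun h0 => hw (by simp [h0, Real.zero_rpow hr.ne'])
    rw [(hcol w hw').tsum_ofReal_eq fun k => by positivity, ENNReal.ofReal_one]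

end IsSchmidtExpansion

end SchmidtExpansion

section Blocks

variable {𝕜 E β : Type*} [RCLike 𝕜] [NormedAddCommGroup E] [InnerProductSpace 𝕜 E]
  {α : β → Type*} [∀ j, Fintype (α j)]

namespace Orthonormal

variable {v : (Σ j, α j) → E} (hv : Orthonormal 𝕜 v)

noncomputable def blockEmb (j : β) : EuclideanSpace 𝕜 (α j) →ₗᵢ[𝕜] E :=
  (Fintype.linearCombination 𝕜 (fun k => v ⟨j, k⟩) ∘ₗ
    (WithLp.linearEquiv 2 𝕜 (α j → 𝕜)).toLinearMap).isometryOfInner fun x y => by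
    have hvj : Orthonormal 𝕜 fun k => v ⟨j, k⟩ := hv.comp _ sigma_mk_injective
    simp [Fintype.linearCombination_apply, hvj.inner_sum, PiLp.inner_apply, mul_comm]

theorem blockEmb_apply (j : β) (x : EuclideanSpace 𝕜 (α j)) :
    hv.blockEmb j x = ∑ k, x k • v ⟨j, k⟩ := by
  simp [blockEmb, Fintype.linearCombination_apply]

theorem blockEmb_single [∀ j, DecidableEq (α j)] (j : β) (k : α j) :
    hv.blockEmb j (EuclideanSpace.single k 1) = v ⟨j, k⟩ := by
  simp [blockEmb_apply]

theorem orthogonalFamily_blockEmb :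
    OrthogonalFamily 𝕜 (fun j => EuclideanSpace 𝕜 (α j)) hv.blockEmb := by
  intro i j hij x y
  have hblock : ∀ m k, ⟪v ⟨i, m⟩, v ⟨j, k⟩⟫_𝕜 = 0 := fun m k =>
    hv.2 fun h => hij (congrArg Sigma.fst h)
  simp [blockEmb_apply, sum_inner, inner_sum, inner_smul_left, inner_smul_right, hblock]

end Orthonormal

namespace HilbertBasis

variable (e : HilbertBasis (Σ j, α j) 𝕜 E)

noncomputable def mapBlocks [CompleteSpace E]
    (B : ∀ j, OrthonormalBasis (α j) 𝕜 (EuclideanSpace 𝕜 (α j))) : HilbertBasis (Σ j, α j) 𝕜 E :=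
  .mk (e.orthonormal.orthogonalFamily_blockEmb.orthonormal_sigma_orthonormal
    fun j => (B j).orthonormal) <| by
    classical
    have hmem : ∀ j x, e.orthonormal.blockEmb j x ∈ Submodule.span 𝕜
        (Set.range fun w : Σ j, α j => e.orthonormal.blockEmb w.1 (B w.1 w.2)) := fun j x => by
      rw [← (B j).sum_repr' x, map_sum]
      refine Submodule.sum_mem _ fun k _ => ?_
      rw [map_smul]
      exact Submodule.smul_mem _ _ (Submodule.subset_span ⟨⟨j, k⟩, rfl⟩)
    rw [← e.dense_span]
    refine Submodule.topologicalClosure_mono (Submodule.span_le.mpr ?_)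
    rintro _ ⟨⟨j, k⟩, rfl⟩
    simpa [e.orthonormal.blockEmb_single] using hmem j (EuclideanSpace.single k 1)

theorem coe_mapBlocks [CompleteSpace E]
    (B : ∀ j, OrthonormalBasis (α j) 𝕜 (EuclideanSpace 𝕜 (α j))) :
    ⇑(e.mapBlocks B) = fun w => e.orthonormal.blockEmb w.1 (B w.1 w.2) :=
  HilbertBasis.coe_mk _ _

theorem apply_blockEmb [∀ j, DecidableEq (α j)] {T : E →L[𝕜] E}
    (hinv : ∀ j k, T (e ⟨j, k⟩) ∈ Submodule.span 𝕜 (Set.range fun k' => e ⟨j, k'⟩))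
    {σ : ∀ j, Matrix (α j) (α j) 𝕜} (hσ : ∀ j m k, σ j m k = ⟪e ⟨j, m⟩, T (e ⟨j, k⟩)⟫_𝕜)
    (j : β) (x : EuclideanSpace 𝕜 (α j)) :
    T (e.orthonormal.blockEmb j x) = e.orthonormal.blockEmb j (Matrix.toEuclideanLin (σ j) x) := by
  have hcol : ∀ k, T (e ⟨j, k⟩) = ∑ m, σ j m k • e ⟨j, m⟩ := fun k => by
    simp_rw [hσ]
    exact ((e.orthonormal.comp _ sigma_mk_injective).sum_inner_smul_eq_of_mem_span
      (hinv j k)).symm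
  simp only [Orthonormal.blockEmb_apply, map_sum, map_smul, hcol, Finset.smul_sum, smul_smul,
    Matrix.toLpLin_apply, Matrix.mulVec, dotProduct, Finset.sum_smul]
  rw [Finset.sum_comm]
  simp [mul_comm]

end HilbertBasis

end Blocks

namespace Matrix

variable {n : ℕ} (A : Matrix (Fin n) (Fin n) ℂ)

theorem inner_toEuclideanLin_eigenvectorBasis (i j : Fin n) :
    ⟪toEuclideanLin A ((posSemidef_conjTranspose_mul_self A).1.eigenvectorBasis i),
      toEuclideanLin A ((posSemidef_conjTranspose_mul_self A).1.eigenvectorBasis j)⟫_ℂ =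
      if i = j then (matrixSingularValues A i : ℂ) ^ 2 else 0 := by
  set hA := (posSemidef_conjTranspose_mul_self A).1
  have heig : toEuclideanLin (Aᴴ * A) (hA.eigenvectorBasis j) =
      (hA.eigenvalues j : ℂ) • hA.eigenvectorBasis j := by
    ext k
    simpa [toLpLin_apply, Complex.real_smul] using congrFun (hA.mulVec_eigenvectorBasis j) k
  rw [← LinearMap.adjoint_inner_right, ← toEuclideanLin_conjTranspose_eq_adjoint,
    ← LinearMap.comp_apply, ← Matrix.toLpLin_mul_same, heig, inner_smul_right,
    hA.eigenvectorBasis.inner_eq_ite]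
  split_ifs with hij
  · subst hij
    rw [mul_one, matrixSingularValues, ← Complex.ofReal_pow,
      Real.sq_sqrt ((posSemidef_conjTranspose_mul_self A).eigenvalues_nonneg i)]
  · exact mul_zero _

theorem exists_orthonormalBasis_toEuclideanLin_eigenvectorBasis :
    ∃ b : OrthonormalBasis (Fin n) ℂ (EuclideanSpace ℂ (Fin n)), ∀ i,
      toEuclideanLin A ((posSemidef_conjTranspose_mul_self A).1.eigenvectorBasis i) =
        (matrixSingularValues A i : ℂ) • b i := by
  set u := fun i => toEuclideanLin A ((posSemidef_conjTranspose_mul_self A).1.eigenvectorBasis i)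
  set sv := matrixSingularValues A
  have hnorm : ∀ i, ‖u i‖ = sv i := fun i => by
    have := A.inner_toEuclideanLin_eigenvectorBasis i i
    rw [if_pos rfl, inner_self_eq_norm_sq_to_K] at this
    have hsq : ‖u i‖ ^ 2 = sv i ^ 2 := Complex.ofReal_injective (by push_cast; exact this)
    exact (pow_left_inj₀ (norm_nonneg _) (Real.sqrt_nonneg _) two_ne_zero).mp hsq
  set S : Set (Fin n) := {i | sv i ≠ 0}
  have hS : Orthonormal ℂ (S.domRestrict fun i => (sv i : ℂ)⁻¹ • u i) := by
    refine ⟨fun ⟨i, hi⟩ => ?_, fun ⟨i, _⟩ ⟨j, _⟩ hij => ?_⟩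
    · change ‖(sv i : ℂ)⁻¹ • u i‖ = 1
      rw [norm_smul, hnorm, norm_inv, Complex.norm_real,
        Real.norm_of_nonneg (show 0 ≤ sv i from Real.sqrt_nonneg _), inv_mul_cancel₀ hi]
    · change ⟪(sv i : ℂ)⁻¹ • u i, (sv j : ℂ)⁻¹ • u j⟫_ℂ = 0
      rw [inner_smul_left, inner_smul_right, A.inner_toEuclideanLin_eigenvectorBasis,
        if_neg (Subtype.ext_iff.not.mp hij), mul_zero, mul_zero]
  obtain ⟨b, hb⟩ := hS.exists_orthonormalBasis_extension_of_card_eq (by simp)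
  refine ⟨b, fun i => ?_⟩
  by_cases hi : sv i = 0
  · rw [hi, Complex.ofReal_zero, zero_smul, ← norm_eq_zero]
    exact (hnorm i).trans hi
  · rw [hb i hi, smul_smul, mul_inv_cancel₀ (Complex.ofReal_ne_zero.mpr hi), one_smul]

end Matrix

/-- for `0 < r < ∞`, a bounded invariant operator `T` with matrix symbol `σ`
belongs to the Schatten class `S_r(H)` iff `Σ_ℓ ‖σ(ℓ)‖_{S_r}^r < ∞`, in which case
`‖T‖_{S_r(H)} = (Σ_ℓ ‖σ(ℓ)‖_{S_r}^r)^{1/r}`. -/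
theorem statement11
    {H : Type*} [NormedAddCommGroup H] [InnerProductSpace ℂ H] [CompleteSpace H]
    (r : ℝ) (hr : 0 < r)
    (d : ℕ → ℕ) (hd : ∀ j, 0 < d j)
    (e : HilbertBasis (Σ j : ℕ, Fin (d j)) ℂ H)
    (T : H →L[ℂ] H)
    (hinv : ∀ j : ℕ, ∀ x ∈ Submodule.span ℂ (Set.range fun k : Fin (d j) => (e ⟨j, k⟩ : H)),
      T x ∈ Submodule.span ℂ (Set.range fun k : Fin (d j) => (e ⟨j, k⟩ : H)))
    (σ : ∀ ℓ : ℕ, Matrix (Fin (d ℓ)) (Fin (d ℓ)) ℂ)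
    (hσ : ∀ (ℓ : ℕ) (m k : Fin (d ℓ)),
      σ ℓ m k = ⟪(e ⟨ℓ, m⟩ : H), T (e ⟨ℓ, k⟩)⟫_ℂ) :
    ((∃ (ψ φ : ℕ → H) (s : ℕ → ℝ), IsSchmidtRep T ψ φ s ∧ Summable fun k => s k ^ r) ↔
      Summable fun ℓ : ℕ => ∑ i : Fin (d ℓ), matrixSingularValues (σ ℓ) i ^ r)
    ∧
    (∀ (ψ φ : ℕ → H) (s : ℕ → ℝ), IsSchmidtRep T ψ φ s → (Summable fun k => s k ^ r) →
      (∑' k : ℕ, s k ^ r) ^ (1 / r)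
        = (∑' ℓ : ℕ, ∑ i : Fin (d ℓ), matrixSingularValues (σ ℓ) i ^ r) ^ (1 / r)) := by
  choose b hb using fun ℓ => (σ ℓ).exists_orthonormalBasis_toEuclideanLin_eigenvectorBasis
  set χ := e.mapBlocks fun ℓ => (Matrix.posSemidef_conjTranspose_mul_self (σ ℓ)).1.eigenvectorBasis
  have hχ : IsSchmidtExpansion T χ (fun w => e.orthonormal.blockEmb w.1 (b w.1 w.2))
      (fun w => matrixSingularValues (σ w.1) w.2) :=
    χ.isSchmidtExpansion (e.orthonormal.orthogonalFamily_blockEmb.orthonormal_sigma_orthonormal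
      fun ℓ => (b ℓ).orthonormal) (fun _ => Real.sqrt_nonneg _) fun w => by
      rw [e.coe_mapBlocks, e.apply_blockEmb (fun j k => hinv j _ (Submodule.subset_span ⟨k, rfl⟩))
        hσ, hb, map_smul]
  have hsv : ∀ ℓ i, 0 ≤ matrixSingularValues (σ ℓ) i ^ r := fun _ _ =>
    Real.rpow_nonneg (Real.sqrt_nonneg _) r
  have hsv_sum : ∀ ℓ, 0 ≤ ∑ i : Fin (d ℓ), matrixSingularValues (σ ℓ) i ^ r := fun ℓ =>
    Finset.sum_nonneg fun i _ => hsv ℓ i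
  have hs : ∀ {ψ φ s}, IsSchmidtRep T ψ φ s → ∀ k, 0 ≤ s k ^ r := fun hrep k =>
    Real.rpow_nonneg (hrep.2.2.1 k) r
  have hrpow : ∀ {ψ φ s}, IsSchmidtRep T ψ φ s → ∑' k, ENNReal.ofReal (s k ^ r) =
      ∑' ℓ, ENNReal.ofReal (∑ i : Fin (d ℓ), matrixSingularValues (σ ℓ) i ^ r) := fun hrep => by
    rw [hrep.isSchmidtExpansion.tsum_ofReal_rpow_eq χ hχ hr, ENNReal.tsum_sigma']
    refine tsum_congr fun ℓ => ?_
    rw [tsum_fintype]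
    exact (ENNReal.ofReal_sum_of_nonneg fun i _ => hsv ℓ i).symm
  have : Infinite (Σ j, Fin (d j)) :=
    .of_injective (fun j => ⟨j, ⟨0, hd j⟩⟩) fun _ _ h => congrArg Sigma.fst h
  obtain ⟨_⟩ := nonempty_denumerable (Σ j, Fin (d j))
  have hrep₀ := hχ.isSchmidtRep_comp_equiv (Denumerable.eqv _).symm
  refine ⟨⟨fun ⟨ψ, φ, s, hrep, hsum⟩ => ?_, fun hsum => ⟨_, _, _, hrep₀, ?_⟩⟩,
    fun ψ φ s hrep _ => ?_⟩
  · exact (summable_iff_of_tsum_ofReal_eq (hs hrep) hsv_sum (hrpow hrep)).mp hsum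
  · exact (summable_iff_of_tsum_ofReal_eq (hs hrep₀) hsv_sum (hrpow hrep₀)).mpr hsum
  · rw [tsum_eq_of_tsum_ofReal_eq (hs hrep) hsv_sum (hrpow hrep)]
end

section
/- Let (λ_ℓ)_{ℓ∈ℕ₀} be a sequence of nonnegative reals, ν > 0, s ∈ ℝ and m ∈ ℝ. Let T : H^∞ → H be an invariant linear operator whose matrix symbol σ satisfies the multiplier identity (Tf)^(ℓ) = σ(ℓ) f̂(ℓ) for all f ∈ H^∞ and ℓ ∈ ℕ₀, together with the bound ‖σ(ℓ)‖_op ≤ C (1 + λ_ℓ)^{m/ν} for all ℓ ∈ ℕ₀ and some constant C > 0, where ‖σ(ℓ)‖_op is the operator norm of σ(ℓ) on ℂ^{d_ℓ} with the ℓ² norm. Then for every f ∈ H^∞ one has the Sobolev-type estimate Σ_{ℓ=0}^{∞} (1 + λ_ℓ)^{2(s−m)/ν} |(Tf)^(ℓ)|² ≤ C² Σ_{ℓ=0}^{∞} (1 + λ_ℓ)^{2s/ν} |f̂(ℓ)|², where |·| denotes the Euclidean norm on ℂ^{d_ℓ}. -/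
/-!
Coefficientwise, `(Tf)^(ℓ) = σ(ℓ) f̂(ℓ)` gives `|(Tf)^(ℓ)|² ≤ ‖σ(ℓ)‖_op² |f̂(ℓ)|²
≤ C² (1 + λ_ℓ)^{2m/ν} |f̂(ℓ)|²`, and the weight `(1 + λ_ℓ)^{2(s-m)/ν}` turns
`(1 + λ_ℓ)^{2m/ν}` into `(1 + λ_ℓ)^{2s/ν}`. Summing over `ℓ` in `[0, ∞]` needs no
summability.
-/

open scoped InnerProductSpace

namespace Matrix

variable {𝕜 ι : Type*} [RCLike 𝕜] [Fintype ι] [DecidableEq ι]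

theorem sum_norm_sq_mulVec_le (A : Matrix ι ι 𝕜) (v : ι → 𝕜) :
    ∑ i, ‖(A *ᵥ v) i‖ ^ 2 ≤ ‖toEuclideanCLM (𝕜 := 𝕜) A‖ ^ 2 * ∑ i, ‖v i‖ ^ 2 := by
  let A' := toEuclideanCLM (𝕜 := 𝕜) A
  have hv : ∑ i, ‖v i‖ ^ 2 = ‖WithLp.toLp 2 v‖ ^ 2 := (EuclideanSpace.norm_sq_eq _).symm
  have hAv : ∑ i, ‖(A *ᵥ v) i‖ ^ 2 = ‖A' (WithLp.toLp 2 v)‖ ^ 2 :=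
    (EuclideanSpace.norm_sq_eq (A' (WithLp.toLp 2 v))).symm
  rw [hv, hAv, ← mul_pow]
  exact pow_le_pow_left₀ (norm_nonneg _) (A'.le_opNorm _) 2

end Matrix

theorem Real.rpow_sub_mul_sq_mul_rpow {x : ℝ} (hx : 0 < x) (C s m ν : ℝ) :
    x ^ (2 * (s - m) / ν) * (C * x ^ (m / ν)) ^ 2 = C ^ 2 * x ^ (2 * s / ν) := by
  rw [mul_pow, ← Real.rpow_natCast (x ^ (m / ν)), ← Real.rpow_mul hx.le, mul_left_comm,
    ← Real.rpow_add hx]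
  congr 2
  push_cast
  ring

theorem ENNReal.tsum_ofReal_le_ofReal_mul_tsum {ι : Type*} {a b : ι → ℝ} {c : ℝ} (hc : 0 ≤ c)
    (hab : ∀ n, a n ≤ c * b n) :
    ∑' n, ENNReal.ofReal (a n) ≤ ENNReal.ofReal c * ∑' n, ENNReal.ofReal (b n) := by
  rw [← ENNReal.tsum_mul_left]
  refine ENNReal.tsum_le_tsum fun n => ?_
  rw [← ENNReal.ofReal_mul hc]
  exact ENNReal.ofReal_le_ofReal (hab n)

theorem statement17_general
    {H : Type*} [NormedAddCommGroup H] [InnerProductSpace ℂ H] [CompleteSpace H]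
    (Hinf : Submodule ℂ H)
    (d : ℕ → ℕ)
    (e : HilbertBasis (Σ j : ℕ, Fin (d j)) ℂ H)
    (lam : ℕ → ℝ) (hlam : ∀ ℓ, 0 ≤ lam ℓ)
    (ν : ℝ) (s m : ℝ) (C : ℝ)
    (T : Hinf →ₗ[ℂ] H)
    (σ : ∀ ℓ : ℕ, Matrix (Fin (d ℓ)) (Fin (d ℓ)) ℂ)
    (hmult : ∀ (f : Hinf) (ℓ : ℕ) (m' : Fin (d ℓ)),
      ⟪(e ⟨ℓ, m'⟩ : H), T f⟫_ℂ = ∑ k : Fin (d ℓ), σ ℓ m' k * ⟪(e ⟨ℓ, k⟩ : H), (f : H)⟫_ℂ)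
    (hbound : ∀ ℓ : ℕ,
      ‖Matrix.toEuclideanCLM (𝕜 := ℂ) (σ ℓ)‖ ≤ C * (1 + lam ℓ) ^ (m / ν)) :
    ∀ f : Hinf,
      (∑' ℓ : ℕ, ENNReal.ofReal ((1 + lam ℓ) ^ (2 * (s - m) / ν) *
          ∑ m' : Fin (d ℓ), ‖⟪(e ⟨ℓ, m'⟩ : H), T f⟫_ℂ‖ ^ 2))
        ≤ ENNReal.ofReal (C ^ 2) *
          ∑' ℓ : ℕ, ENNReal.ofReal ((1 + lam ℓ) ^ (2 * s / ν) *
            ∑ k : Fin (d ℓ), ‖⟪(e ⟨ℓ, k⟩ : H), (f : H)⟫_ℂ‖ ^ 2) := by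
  intro f
  refine ENNReal.tsum_ofReal_le_ofReal_mul_tsum (sq_nonneg C) fun ℓ => ?_
  set coeff : Fin (d ℓ) → ℂ := fun k => ⟪(e ⟨ℓ, k⟩ : H), (f : H)⟫_ℂ
  have hx : 0 < 1 + lam ℓ := by linarith [hlam ℓ]
  have hTf : ∑ m', ‖⟪(e ⟨ℓ, m'⟩ : H), T f⟫_ℂ‖ ^ 2 = ∑ m', ‖((σ ℓ).mulVec coeff) m'‖ ^ 2 := by
    simp only [hmult, Matrix.mulVec, dotProduct, coeff]
  calc (1 + lam ℓ) ^ (2 * (s - m) / ν) * ∑ m', ‖⟪(e ⟨ℓ, m'⟩ : H), T f⟫_ℂ‖ ^ 2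
      ≤ (1 + lam ℓ) ^ (2 * (s - m) / ν) *
          ((C * (1 + lam ℓ) ^ (m / ν)) ^ 2 * ∑ k, ‖coeff k‖ ^ 2) := by
        rw [hTf]
        gcongr
        exact (Matrix.sum_norm_sq_mulVec_le _ _).trans (by gcongr; exact hbound ℓ)
    _ = C ^ 2 * ((1 + lam ℓ) ^ (2 * s / ν) * ∑ k, ‖coeff k‖ ^ 2) := by
        rw [← mul_assoc, Real.rpow_sub_mul_sq_mul_rpow hx, mul_assoc]

/-- if an invariant operator `T` has a symbol `σ` satisfying the multiplier
identity `(Tf)^(ℓ) = σ(ℓ) f̂(ℓ)` and the bound `‖σ(ℓ)‖_op ≤ C (1 + λ_ℓ)^{m/ν}`, then the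
Sobolev-type estimate
`Σ_ℓ (1 + λ_ℓ)^{2(s−m)/ν} |(Tf)^(ℓ)|² ≤ C² Σ_ℓ (1 + λ_ℓ)^{2s/ν} |f̂(ℓ)|²`
holds for every `f ∈ H^∞` (sums of nonnegative terms, computed in `[0,∞]`). -/
theorem statement17
    {H : Type*} [NormedAddCommGroup H] [InnerProductSpace ℂ H] [CompleteSpace H]
    (Hinf : Submodule ℂ H) (hdense : Dense (Hinf : Set H))
    (d : ℕ → ℕ) (hd : ∀ j, 0 < d j)
    (e : HilbertBasis (Σ j : ℕ, Fin (d j)) ℂ H)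
    (he : ∀ i : Σ j : ℕ, Fin (d j), (e i : H) ∈ Hinf)
    (lam : ℕ → ℝ) (hlam : ∀ ℓ, 0 ≤ lam ℓ)
    (ν : ℝ) (hν : 0 < ν) (s m : ℝ) (C : ℝ) (hC : 0 < C)
    (T : Hinf →ₗ[ℂ] H)
    (hinv : ∀ j : ℕ, ∀ x : Hinf,
      (x : H) ∈ Submodule.span ℂ (Set.range fun k : Fin (d j) => (e ⟨j, k⟩ : H)) →
      T x ∈ Submodule.span ℂ (Set.range fun k : Fin (d j) => (e ⟨j, k⟩ : H)))
    (σ : ∀ ℓ : ℕ, Matrix (Fin (d ℓ)) (Fin (d ℓ)) ℂ)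
    (hmult : ∀ (f : Hinf) (ℓ : ℕ) (m' : Fin (d ℓ)),
      ⟪(e ⟨ℓ, m'⟩ : H), T f⟫_ℂ = ∑ k : Fin (d ℓ), σ ℓ m' k * ⟪(e ⟨ℓ, k⟩ : H), (f : H)⟫_ℂ)
    (hbound : ∀ ℓ : ℕ,
      ‖Matrix.toEuclideanCLM (𝕜 := ℂ) (σ ℓ)‖ ≤ C * (1 + lam ℓ) ^ (m / ν)) :
    ∀ f : Hinf,
      (∑' ℓ : ℕ, ENNReal.ofReal ((1 + lam ℓ) ^ (2 * (s - m) / ν) *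
          ∑ m' : Fin (d ℓ), ‖⟪(e ⟨ℓ, m'⟩ : H), T f⟫_ℂ‖ ^ 2))
        ≤ ENNReal.ofReal (C ^ 2) *
          ∑' ℓ : ℕ, ENNReal.ofReal ((1 + lam ℓ) ^ (2 * s / ν) *
            ∑ k : Fin (d ℓ), ‖⟪(e ⟨ℓ, k⟩ : H), (f : H)⟫_ℂ‖ ^ 2) :=
  statement17_general Hinf d e lam hlam ν s m C T σ hmult hbound
end
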